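/- For every m ≥ 1, every η > 0, n > 0, δ > 0 with ηnδ² > m, the integral over the complement of the ball of radius δ centered at any point w₀ ∈ ℝᵐ of exp(−(ηn/2)‖w − w₀‖²) dw is at most (2πe/(ηn))^(m/2) · exp(−ηnδ²/4). -/
import Mathlib

open MeasureTheory

theorem stmt_9 (m : ℕ) (hm : 1 ≤ m) (η n δ : ℝ) (hη : 0 < η) (hn : 0 < n) (hδ : 0 < δ)
    (hbig : (m : ℝ) < η * n * δ ^ 2) (hbig2 : 2 ≤ η * n * δ ^ 2)
    (w₀ : EuclideanSpace ℝ (Fin m)) :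
    (∫ w in (Metric.ball w₀ δ)ᶜ, Real.exp (-(η * n / 2) * ‖w - w₀‖ ^ 2)) ≤
      (2 * Real.pi * Real.exp 1 / (η * n)) ^ ((m : ℝ) / 2) *
        Real.exp (-(η * n * δ ^ 2 / 4)) := by
  set a := η * n with ha
  have hapos : 0 < a := mul_pos hη hn
  have hb : (0:ℝ) < a / 4 := by linarith
  -- integrability of Gaussians
  have key : ∀ b : ℝ, 0 < b → Integrable (fun w : EuclideanSpace ℝ (Fin m) =>
      Real.exp (-b * ‖w‖ ^ 2)) := by
    intro b hbpos
    have hintC := GaussianFourier.integrable_cexp_neg_mul_sq_norm_add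
      (V := EuclideanSpace ℝ (Fin m)) (b := ((b : ℝ) : ℂ)) (by simpa using hbpos) 0 0
    apply hintC.re.congr
    filter_upwards with w
    simp only [inner_zero_left, Complex.ofReal_zero, mul_zero, zero_mul, add_zero]
    rw [← Complex.ofReal_pow, ← Complex.ofReal_neg, ← Complex.ofReal_mul]
    exact RCLike.re_to_complex.trans (Complex.exp_ofReal_re _)
  have hint' : Integrable (fun w : EuclideanSpace ℝ (Fin m) =>
      Real.exp (-(a/4) * ‖w - w₀‖ ^ 2)) := (key _ hb).comp_sub_right w₀
  have hint2 : Integrable (fun w : EuclideanSpace ℝ (Fin m) =>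
      Real.exp (-(a/2) * ‖w - w₀‖ ^ 2)) := (key _ (by linarith)).comp_sub_right w₀
  -- pointwise bound on the complement of the ball
  have hmono : (∫ w in (Metric.ball w₀ δ)ᶜ, Real.exp (-(a / 2) * ‖w - w₀‖ ^ 2)) ≤
      ∫ w in (Metric.ball w₀ δ)ᶜ,
        Real.exp (-(a * δ^2 / 4)) * Real.exp (-(a/4) * ‖w - w₀‖ ^ 2) := by
    refine setIntegral_mono_on hint2.integrableOn ((hint'.const_mul _).integrableOn)
      measurableSet_ball.compl ?_
    · intro w hw
      have hd : δ ≤ ‖w - w₀‖ := by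
        have := Metric.mem_ball.not.mp hw
        rw [dist_eq_norm] at this
        linarith [not_lt.mp this]
      rw [← Real.exp_add]
      apply Real.exp_le_exp.2
      nlinarith [mul_le_mul hd hd hδ.le (norm_nonneg (w - w₀)), hapos]
  have hpull : (∫ w in (Metric.ball w₀ δ)ᶜ,
        Real.exp (-(a * δ^2 / 4)) * Real.exp (-(a/4) * ‖w - w₀‖ ^ 2))
      = Real.exp (-(a * δ^2 / 4)) *
        ∫ w in (Metric.ball w₀ δ)ᶜ, Real.exp (-(a/4) * ‖w - w₀‖ ^ 2) := by
    rw [integral_const_mul]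
  have hle2 : (∫ w in (Metric.ball w₀ δ)ᶜ, Real.exp (-(a/4) * ‖w - w₀‖ ^ 2)) ≤
      ∫ w : EuclideanSpace ℝ (Fin m), Real.exp (-(a/4) * ‖w - w₀‖ ^ 2) :=
    setIntegral_le_integral hint' (Filter.Eventually.of_forall fun w => (Real.exp_pos _).le)
  have hgauss : (∫ w : EuclideanSpace ℝ (Fin m), Real.exp (-(a/4) * ‖w - w₀‖ ^ 2))
      = (Real.pi / (a/4)) ^ ((m : ℝ) / 2) := by
    rw [integral_sub_right_eq_self (fun w : EuclideanSpace ℝ (Fin m) =>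
      Real.exp (-(a/4) * ‖w‖ ^ 2)) w₀]
    rw [GaussianFourier.integral_rexp_neg_mul_sq_norm hb]
    simp
  have hbase : (Real.pi / (a/4)) ^ ((m : ℝ) / 2) ≤
      (2 * Real.pi * Real.exp 1 / a) ^ ((m : ℝ) / 2) := by
    apply Real.rpow_le_rpow (by positivity) _ (by positivity)
    rw [div_le_div_iff₀ (by linarith) hapos]
    nlinarith [Real.pi_pos, Real.exp_one_gt_d9, mul_pos Real.pi_pos hapos]
  calc (∫ w in (Metric.ball w₀ δ)ᶜ, Real.exp (-(η * n / 2) * ‖w - w₀‖ ^ 2))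
      ≤ Real.exp (-(a * δ^2 / 4)) *
        ∫ w in (Metric.ball w₀ δ)ᶜ, Real.exp (-(a/4) * ‖w - w₀‖ ^ 2) := by
        rw [← hpull]; exact hmono
    _ ≤ Real.exp (-(a * δ^2 / 4)) * (Real.pi / (a/4)) ^ ((m : ℝ) / 2) := by
        apply mul_le_mul_of_nonneg_left _ (Real.exp_pos _).le
        rw [← hgauss]; exact hle2
    _ ≤ Real.exp (-(a * δ^2 / 4)) * (2 * Real.pi * Real.exp 1 / a) ^ ((m : ℝ) / 2) :=
        mul_le_mul_of_nonneg_left hbase (Real.exp_pos _).le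
    _ = (2 * Real.pi * Real.exp 1 / (η * n)) ^ ((m : ℝ) / 2) *
        Real.exp (-(η * n * δ ^ 2 / 4)) := by rw [mul_comm, ha]
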